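/- For any graphs G and H, γ_R(G □ H) ≥ (2/3)·γ(G)·γ_R(H), where G □ H is the Cartesian product. -/

import Mathlib

open Finset

/-- A set `S` is a dominating set of `G` if every vertex outside `S` has a neighbor in `S`. -/
def IsDominatingSet {V : Type*} (G : SimpleGraph V) (S : Set V) : Prop :=
  ∀ v, v ∉ S → ∃ u ∈ S, G.Adj u v

/-- The domination number `γ(G)`. -/
noncomputable def domNum {V : Type*} [Fintype V] (G : SimpleGraph V) : ℕ :=
  sInf {n | ∃ S : Finset V, IsDominatingSet G ↑S ∧ S.card = n}

/-- A Roman dominating function: values in {0,1,2}, every vertex of value 0 has a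
neighbor of value 2. -/
def IsRDF {V : Type*} (G : SimpleGraph V) (f : V → ℕ) : Prop :=
  (∀ v, f v ≤ 2) ∧ ∀ v, f v = 0 → ∃ u, G.Adj u v ∧ f u = 2

/-- The Roman domination number `γ_R(G)`. -/
noncomputable def romanDomNum {V : Type*} [Fintype V] (G : SimpleGraph V) : ℕ :=
  sInf {n | ∃ f : V → ℕ, IsRDF G f ∧ ∑ v, f v = n}

/-- The strong product of graphs. -/
def strongProd {V W : Type*} (G : SimpleGraph V) (H : SimpleGraph W) :
    SimpleGraph (V × W) where
  Adj x y := x ≠ y ∧ (x.1 = y.1 ∨ G.Adj x.1 y.1) ∧ (x.2 = y.2 ∨ H.Adj x.2 y.2)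
  symm := ⟨fun x y => by
    rintro ⟨h, h1, h2⟩
    refine ⟨h.symm, ?_, ?_⟩
    · cases h1 with
      | inl h => exact Or.inl h.symm
      | inr h => exact Or.inr h.symm
    · cases h2 with
      | inl h => exact Or.inl h.symm
      | inr h => exact Or.inr h.symm⟩
  loopless := ⟨fun x => by simp⟩

/-- `G` has an efficient dominating set: a dominating set whose elements have
pairwise disjoint closed neighborhoods. -/
def HasEfficientDomSet {V : Type*} (G : SimpleGraph V) : Prop :=
  ∃ S : Finset V, IsDominatingSet G ↑S ∧
    ∀ u ∈ S, ∀ v ∈ S, u ≠ v →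
      Disjoint (insert u (G.neighborSet u)) (insert v (G.neighborSet v))

/-!
Fix a minimum dominating set `S` of `G`, assign every vertex of `G` to a dominator in `S`, and
let `f` be a minimum Roman dominating function of `G □ H` of weight `w`. For `i ∈ S`, collapsing
the cell of `i` (the vertices assigned to it) column by column yields a Roman dominating function
of `H` of weight at most the weight of `f` on that cell plus one for every *undefended* column
`h`, where the cell carries no weight and no vertex of it has a vertical neighbour of value 2.
Summing over `S` gives `γ(G) γ_R(H) ≤ w + #undefended`. In a fixed column `h`, the vertices of
value 2 together with the defended part of `S` still dominate `G`, so the number of undefended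
cells in column `h` is at most the number of 2's in that column, and these number at most `w / 2`
in total. Hence `γ(G) γ_R(H) ≤ 3w / 2`.
-/

section Domination

variable {V : Type*} {G : SimpleGraph V}

lemma IsDominatingSet.exists_dominator {S : Set V} (hS : IsDominatingSet G S) (v : V) :
    ∃ u ∈ S, u = v ∨ G.Adj u v := by
  by_cases hv : v ∈ S
  · exact ⟨v, hv, Or.inl rfl⟩
  · obtain ⟨u, hu, huv⟩ := hS v hv
    exact ⟨u, hu, Or.inr huv⟩

variable [Fintype V]

lemma domNum_le_card {S : Finset V} (hS : IsDominatingSet G S) : domNum G ≤ #S :=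
  Nat.sInf_le ⟨S, hS, rfl⟩

lemma exists_isDominatingSet_card_eq_domNum (G : SimpleGraph V) :
    ∃ S : Finset V, IsDominatingSet G S ∧ #S = domNum G :=
  Nat.sInf_mem (s := {n | ∃ S : Finset V, IsDominatingSet G S ∧ #S = n})
    ⟨_, univ, fun v hv => absurd (mem_coe.2 (mem_univ v)) hv, rfl⟩

lemma romanDomNum_le_sum {f : V → ℕ} (hf : IsRDF G f) : romanDomNum G ≤ ∑ v, f v :=
  Nat.sInf_le ⟨f, hf, rfl⟩

lemma exists_isRDF_sum_eq_romanDomNum (G : SimpleGraph V) :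
    ∃ f : V → ℕ, IsRDF G f ∧ ∑ v, f v = romanDomNum G :=
  Nat.sInf_mem (s := {n | ∃ f : V → ℕ, IsRDF G f ∧ ∑ v, f v = n})
    ⟨_, fun _ => 2, ⟨fun _ => le_rfl, fun _ h => absurd h two_ne_zero⟩, rfl⟩

end Domination

lemma two_mul_card_filter_eq_two_le_sum {α : Type*} (s : Finset α) (g : α → ℕ) :
    2 * #{x ∈ s | g x = 2} ≤ ∑ x ∈ s, g x :=
  calc 2 * #{x ∈ s | g x = 2}
      = #{x ∈ s | g x = 2} • 2 := by rw [smul_eq_mul, mul_comm]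
    _ ≤ ∑ x ∈ s with g x = 2, g x :=
        card_nsmul_le_sum _ _ _ fun x hx => (mem_filter.1 hx).2.ge
    _ ≤ ∑ x ∈ s, g x := sum_le_sum_of_subset (filter_subset _ _)

section Projection

variable {V W : Type*} (H : SimpleGraph W) (f : V × W → ℕ) (A : Finset V)

def cellSum (h : W) : ℕ := ∑ v ∈ A, f (v, h)

def VerticallyUndefended (h : W) : Prop :=
  cellSum f A h = 0 ∧ ∀ v ∈ A, ∀ h', H.Adj h' h → f (v, h') ≠ 2

open Classical in
noncomputable def cellProj (h : W) : ℕ :=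
  if VerticallyUndefended H f A h then 1 else min 2 (cellSum f A h)

lemma isRDF_cellProj : IsRDF H (cellProj H f A) := by
  refine ⟨fun h => ?_, fun h h0 => ?_⟩
  · unfold cellProj
    split_ifs <;> omega
  have hdef : ¬VerticallyUndefended H f A h := fun hu => by simp [cellProj, hu] at h0
  have hsum : cellSum f A h = 0 := by
    simp only [cellProj, hdef, if_false] at h0
    omega
  obtain ⟨v, hv, h', hadj, hv2⟩ : ∃ v ∈ A, ∃ h', H.Adj h' h ∧ f (v, h') = 2 := by
    simpa [VerticallyUndefended, hsum] using hdef
  have hsum' : 2 ≤ cellSum f A h' :=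
    hv2 ▸ single_le_sum (f := fun v => f (v, h')) (fun _ _ => Nat.zero_le _) hv
  have hdef' : ¬VerticallyUndefended H f A h' := fun hu => by
    have := hu.1
    omega
  refine ⟨h', hadj, ?_⟩
  simp only [cellProj, hdef', if_false]
  omega

open Classical in
lemma romanDomNum_le_sum_cellSum_add_card [Fintype W] :
    romanDomNum H ≤ ∑ h, cellSum f A h + #{h | VerticallyUndefended H f A h} := by
  have hproj : ∀ h, cellProj H f A h ≤
      cellSum f A h + if VerticallyUndefended H f A h then 1 else 0 := by
    intro h
    unfold cellProj
    split_ifs with hu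
    · rw [hu.1]
    · omega
  calc romanDomNum H ≤ ∑ h, cellProj H f A h := romanDomNum_le_sum (isRDF_cellProj H f A)
    _ ≤ ∑ h, (cellSum f A h + if VerticallyUndefended H f A h then 1 else 0) :=
        sum_le_sum fun h _ => hproj h
    _ = _ := by rw [sum_add_distrib, card_filter]

end Projection

section Cells

open Classical

variable {V W : Type*} [Fintype V] {G : SimpleGraph V} {H : SimpleGraph W}
  {f : V × W → ℕ} {S : Finset V} {c : V → V}

lemma sum_cellSum_fiber (hc : ∀ v, c v ∈ S) (h : W) :
    ∑ i ∈ S, cellSum f {v | c v = i} h = ∑ v, f (v, h) :=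
  sum_fiberwise_of_maps_to (fun v _ => hc v) _

lemma isDominatingSet_twos_union_defended (hf : IsRDF (G □ H) f)
    (hc : ∀ v, c v ∈ S ∧ (c v = v ∨ G.Adj (c v) v)) (h : W) :
    IsDominatingSet G
      ↑(({v | f (v, h) = 2} : Finset V) ∪
        {i ∈ S | ¬VerticallyUndefended H f {v | c v = i} h}) := by
  intro v hv
  simp only [coe_union, coe_filter, Set.mem_union, Set.mem_ofPred_eq, mem_univ, true_and,
    not_or] at hv ⊢
  by_cases hund : VerticallyUndefended H f {u | c u = c v} h
  · have hv0 : f (v, h) = 0 := sum_eq_zero_iff.1 hund.1 v (by simp)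
    obtain ⟨⟨a, b⟩, hadj, ha2⟩ := hf.2 (v, h) hv0
    rcases SimpleGraph.boxProd_adj.1 hadj with ⟨hav, rfl⟩ | ⟨hbh, rfl⟩
    · exact ⟨a, Or.inl ha2, hav⟩
    · exact absurd ha2 (hund.2 a (by simp) b hbh)
  · rcases (hc v).2 with hcv | hcv
    · exact absurd ⟨hcv ▸ (hc v).1, hcv ▸ hund⟩ hv.2
    · exact ⟨c v, Or.inr ⟨(hc v).1, hund⟩, hcv⟩

lemma card_verticallyUndefended_le (hf : IsRDF (G □ H) f)
    (hc : ∀ v, c v ∈ S ∧ (c v = v ∨ G.Adj (c v) v)) (hS : #S = domNum G) (h : W) :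
    #{i ∈ S | VerticallyUndefended H f {v | c v = i} h} ≤ #{v | f (v, h) = 2} := by
  have hdom := domNum_le_card (isDominatingSet_twos_union_defended hf hc h)
  have hunion := card_union_le {v | f (v, h) = 2}
    {i ∈ S | ¬VerticallyUndefended H f {v | c v = i} h}
  have hsplit := card_filter_add_card_filter_not (s := S)
    (fun i => VerticallyUndefended H f {v | c v = i} h)
  omega

end Cells

lemma two_mul_domNum_mul_romanDomNum_le {V W : Type*} [Fintype V] [Fintype W]
    (G : SimpleGraph V) (H : SimpleGraph W) :
    2 * (domNum G * romanDomNum H) ≤ 3 * romanDomNum (G □ H) := by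
  classical
  obtain ⟨S, hSdom, hS⟩ := exists_isDominatingSet_card_eq_domNum G
  obtain ⟨f, hf, hfw⟩ := exists_isRDF_sum_eq_romanDomNum (G □ H)
  choose c hc using hSdom.exists_dominator
  set w := romanDomNum (G □ H)
  set undef : V → W → Prop := fun i h => VerticallyUndefended H f {v | c v = i} h
  have hw : ∑ h, ∑ v, f (v, h) = w := by rw [← hfw, Fintype.sum_prod_type, sum_comm]
  have hcells : ∑ i ∈ S, ∑ h, cellSum f {v | c v = i} h = w := by
    rw [sum_comm, ← hw]
    exact sum_congr rfl fun h _ => sum_cellSum_fiber (fun v => (hc v).1) h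
  have hundef : ∑ i ∈ S, #{h | undef i h} ≤ ∑ h, #{v | f (v, h) = 2} := by
    calc ∑ i ∈ S, #{h | undef i h} = ∑ h, #{i ∈ S | undef i h} :=
          sum_card_bipartiteAbove_eq_sum_card_bipartiteBelow undef
      _ ≤ _ := sum_le_sum fun h _ => card_verticallyUndefended_le hf hc hS h
  have htwos : 2 * ∑ h, #{v | f (v, h) = 2} ≤ w := by
    rw [mul_sum, ← hw]
    exact sum_le_sum fun h _ => two_mul_card_filter_eq_two_le_sum _ _
  have hmain : #S * romanDomNum H ≤ w + ∑ i ∈ S, #{h | undef i h} :=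
    calc #S * romanDomNum H = ∑ _i ∈ S, romanDomNum H := by rw [sum_const, smul_eq_mul]
      _ ≤ ∑ i ∈ S, (∑ h, cellSum f {v | c v = i} h + #{h | undef i h}) :=
          sum_le_sum fun i _ => romanDomNum_le_sum_cellSum_add_card H f _
      _ = w + ∑ i ∈ S, #{h | undef i h} := by rw [sum_add_distrib, hcells]
  rw [← hS]
  omega

theorem stmt3 {V W : Type*} [Fintype V] [Fintype W]
    (G : SimpleGraph V) (H : SimpleGraph W) :
    (romanDomNum (G.boxProd H) : ℝ) ≥ 2 * domNum G * romanDomNum H / 3 := by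
  have key : (2 * (domNum G * romanDomNum H) : ℝ) ≤ 3 * romanDomNum (G □ H) := by
    exact_mod_cast two_mul_domNum_mul_romanDomNum_le G H
  rw [ge_iff_le, div_le_iff₀ (by norm_num : (0 : ℝ) < 3)]
  linarith
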